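/- arXiv:0812.3115 — 7 statements merged into one kernel-verified Lean document; each statement's English description precedes it below -/
import Mathlib

section
/- For nodes 0 < x_1 < x_2 < ... < x_{n+1} < 1, the (n+1)×(n+1) Bernstein–Vandermonde matrix A with entries A_{i,j} = C(n, j-1) * x_i^{j-1} * (1-x_i)^{n-j+1} has nonzero determinant (it is invertible). -/
theorem bernstein_vandermonde_det_ne_zero (n : ℕ) (x : Fin (n+1) → ℝ)
    (hmono : StrictMono x) (h01 : ∀ i, 0 < x i ∧ x i < 1) :
    (Matrix.of fun i j : Fin (n+1) =>
      (n.choose (j : ℕ) : ℝ) * x i ^ (j : ℕ) * (1 - x i) ^ (n - (j : ℕ))).det ≠ 0 := by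
  set y : Fin (n+1) → ℝ := fun i => x i / (1 - x i) with hy
  have h1x : ∀ i, (0:ℝ) < 1 - x i := fun i => by linarith [(h01 i).2]
  have hymono : StrictMono y := by
    intro a b hab
    have hxa := (h01 a).1
    have hxb := (h01 b).1
    have hlt := hmono hab
    rw [hy]
    simp only
    rw [div_lt_div_iff₀ (h1x a) (h1x b)]
    nlinarith
  have key : (Matrix.of fun i j : Fin (n+1) =>
      (n.choose (j : ℕ) : ℝ) * x i ^ (j : ℕ) * (1 - x i) ^ (n - (j : ℕ)))
      = Matrix.diagonal (fun i => (1 - x i)^n) * Matrix.vandermonde y *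
        Matrix.diagonal (fun j : Fin (n+1) => (n.choose (j:ℕ) : ℝ)) := by
    ext i j
    rw [Matrix.mul_diagonal, Matrix.diagonal_mul]
    simp only [Matrix.of_apply, Matrix.vandermonde_apply, hy]
    have hj : (j : ℕ) ≤ n := Nat.lt_succ_iff.mp j.isLt
    have hne : (1 - x i) ≠ 0 := ne_of_gt (h1x i)
    have hpow : (1 - x i)^n = (1 - x i)^(n - (j:ℕ)) * (1 - x i)^(j:ℕ) := by
      rw [← pow_add, Nat.sub_add_cancel hj]
    rw [div_pow, hpow]
    field_simp
  rw [key, Matrix.det_mul, Matrix.det_mul, Matrix.det_diagonal, Matrix.det_diagonal,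
    Matrix.det_vandermonde]
  apply mul_ne_zero
  apply mul_ne_zero
  · rw [Finset.prod_ne_zero_iff]
    intro i _
    exact pow_ne_zero _ (ne_of_gt (h1x i))
  · rw [Finset.prod_ne_zero_iff]
    intro i _
    rw [Finset.prod_ne_zero_iff]
    intro j hj
    have : i < j := Finset.mem_Ioi.mp hj
    exact sub_ne_zero_of_ne (ne_of_gt (hymono this))
  · rw [Finset.prod_ne_zero_iff]
    intro j _
    have hj : (j : ℕ) ≤ n := Nat.lt_succ_iff.mp j.isLt
    exact_mod_cast (Nat.choose_pos hj).ne'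
end

section
/- For nodes 0 < x_1 < ... < x_{l+1} < 1 with l ≥ n, every minor of the (l+1)×(n+1) Bernstein–Vandermonde matrix A_{i,j} = C(n, j-1) x_i^{j-1} (1-x_i)^{n-j+1} is strictly positive; i.e., A is strictly totally positive. -/
/-!
Write `y = x / (1 - x)`. Row `i` of the Bernstein–Vandermonde matrix is `(1 - xᵢ) ^ n` times
`(C(n, j) * yᵢ ^ j)ⱼ`, and `x ↦ x / (1 - x)` maps `(0, 1)` increasingly onto `(0, ∞)`, so every
minor is a positive multiple of a generalized Vandermonde determinant `det (tᵢ ^ eⱼ)` with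
`0 < t₀ < t₁ < ⋯` and `e₀ < e₁ < ⋯`.

Such a determinant never vanishes: a nonzero `∑ⱼ aⱼ s ^ eⱼ` with `k` terms has fewer than `k`
positive roots (divide by `s ^ e₀`, differentiate and apply Rolle's theorem, Descartes-style).
The admissible node vectors form a convex set, on which the determinant therefore has constant
sign, and at `tᵢ = 2 ^ i` it is an ordinary Vandermonde determinant in the nodes `2 ^ eⱼ`.
-/

open Finset Matrix

noncomputable def genVandermonde {k : ℕ} (t : Fin k → ℝ) (e : Fin k → ℕ) :
    Matrix (Fin k) (Fin k) ℝ :=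
  of fun i j => t i ^ e j

theorem exists_strictMono_deriv_eq_zero_between {k : ℕ} {f : ℝ → ℝ} (hf : Differentiable ℝ f)
    {t : Fin (k + 1) → ℝ} (ht : StrictMono t) (hroot : ∀ i, f (t i) = 0) :
    ∃ s : Fin k → ℝ, StrictMono s ∧ (∀ i, t i.castSucc < s i) ∧ ∀ i, deriv f (s i) = 0 := by
  have rolle (i : Fin k) : ∃ c ∈ Set.Ioo (t i.castSucc) (t i.succ), deriv f c = 0 :=
    exists_deriv_eq_zero (ht Fin.castSucc_lt_succ) hf.continuous.continuousOn
      (by rw [hroot, hroot])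
  choose s hs hderiv using rolle
  refine ⟨s, fun i j hij => ?_, fun i => (hs i).1, hderiv⟩
  calc s i < t i.succ := (hs i).2
    _ ≤ t j.castSucc := ht.monotone (Fin.succ_le_castSucc_iff.mpr hij)
    _ < s j := (hs j).1

theorem eq_zero_of_sum_mul_pow_eq_zero {k : ℕ} {a : Fin k → ℝ} {e : Fin k → ℕ}
    (he : StrictMono e) {t : Fin k → ℝ} (ht : StrictMono t) (htpos : ∀ i, 0 < t i)
    (hroot : ∀ i, ∑ j, a j * t i ^ e j = 0) : a = 0 := by
  induction k with
  | zero => exact Subsingleton.elim _ _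
  | succ k ih =>
    set d : Fin (k + 1) → ℕ := fun j => e j - e 0
    have he0 (j : Fin (k + 1)) : e j = e 0 + d j := (Nat.add_sub_of_le (he.monotone j.zero_le)).symm
    have hd_pos (j : Fin k) : 0 < d j.succ := Nat.sub_pos_of_lt (he j.succ_pos)
    set p : ℝ → ℝ := fun s => ∑ j, a j * s ^ d j
    have hp_root (i : Fin (k + 1)) : p (t i) = 0 := by
      have hfactor : ∑ j, a j * t i ^ e j = t i ^ e 0 * p (t i) := by
        rw [mul_sum]
        exact sum_congr rfl fun j _ => by rw [he0 j, pow_add]; ring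
      exact (mul_eq_zero.mp (hfactor ▸ hroot i)).resolve_left (pow_pos (htpos i) _).ne'
    have hp_deriv (s : ℝ) :
        deriv p s = ∑ j : Fin k, a j.succ * d j.succ * s ^ (d j.succ - 1) := by
      have := HasDerivAt.fun_sum (u := univ) fun j _ => (hasDerivAt_pow (d j) s).const_mul (a j)
      rw [this.deriv, Fin.sum_univ_succ]
      simp only [d, Nat.sub_self, Nat.cast_zero, zero_mul, mul_zero, zero_add, mul_assoc]
    obtain ⟨s, hs, hts, hs_root⟩ := exists_strictMono_deriv_eq_zero_between (by fun_prop) ht hp_root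
    have hsucc : ∀ j : Fin k, a j.succ = 0 := by
      have := ih (a := fun j => a j.succ * d j.succ) (e := fun j => d j.succ - 1)
        (fun i j hij => by
          have := he (Fin.succ_lt_succ_iff.mpr hij)
          have := hd_pos i
          simp only [d] at *
          omega) hs
        (fun i => (htpos _).trans (hts i)) (fun i => by rw [← hp_deriv]; exact hs_root i)
      intro j
      exact (mul_eq_zero.mp (congrFun this j)).resolve_right (Nat.cast_ne_zero.mpr (hd_pos j).ne')
    have h0 := hroot 0
    simp only [Fin.sum_univ_succ, hsucc, zero_mul, sum_const_zero, add_zero] at h0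
    have ha0 : a 0 = 0 := (mul_eq_zero.mp h0).resolve_right (pow_pos (htpos 0) _).ne'
    ext j
    cases j using Fin.cases with
    | zero => exact ha0
    | succ j => exact hsucc j

theorem convex_setOf_strictMono_pos {ι : Type*} [Preorder ι] :
    Convex ℝ {t : ι → ℝ | StrictMono t ∧ ∀ i, 0 < t i} := by
  rintro t ⟨ht, htpos⟩ s ⟨hs, hspos⟩ a b ha hb hab
  have combo_lt {p q p' q' : ℝ} (hp : p < q) (hp' : p' < q') : a * p + b * p' < a * q + b * q' := by
    rcases ha.eq_or_lt with rfl | ha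
    · rw [zero_add] at hab
      subst hab
      linarith
    · nlinarith [mul_nonneg hb (sub_nonneg.mpr hp'.le)]
  simp only [Set.mem_ofPred_eq, Pi.add_apply, Pi.smul_apply, smul_eq_mul]
  refine ⟨fun i j hij => combo_lt (ht hij) (hs hij), fun i => ?_⟩
  simpa using combo_lt (htpos i) (hspos i)

section GenVandermonde

variable {k : ℕ} {e : Fin k → ℕ}

theorem det_genVandermonde_ne_zero (he : StrictMono e) {t : Fin k → ℝ} (ht : StrictMono t)
    (htpos : ∀ i, 0 < t i) : (genVandermonde t e).det ≠ 0 := by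
  intro hdet
  obtain ⟨a, ha, hker⟩ := exists_mulVec_eq_zero_iff.mpr hdet
  refine ha (eq_zero_of_sum_mul_pow_eq_zero he ht htpos fun i => ?_)
  simpa [genVandermonde, mulVec, dotProduct, mul_comm] using congrFun hker i

theorem det_genVandermonde_two_pow_pos (he : StrictMono e) :
    0 < (genVandermonde (fun i => (2 : ℝ) ^ (i : ℕ)) e).det := by
  have htranspose : genVandermonde (fun i => (2 : ℝ) ^ (i : ℕ)) e
      = (vandermonde fun j => (2 : ℝ) ^ e j)ᵀ := by
    ext i j
    simp only [genVandermonde, of_apply, transpose_apply, vandermonde_apply, ← pow_mul, mul_comm]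
  rw [htranspose, det_transpose, det_vandermonde]
  exact prod_pos fun i _ => prod_pos fun j hj =>
    sub_pos.mpr (pow_lt_pow_right₀ one_lt_two (he (mem_Ioi.mp hj)))

theorem det_genVandermonde_pos (he : StrictMono e) {t : Fin k → ℝ} (ht : StrictMono t)
    (htpos : ∀ i, 0 < t i) : 0 < (genVandermonde t e).det := by
  have htwo :
      (fun i : Fin k => (2 : ℝ) ^ (i : ℕ)) ∈ {t : Fin k → ℝ | StrictMono t ∧ ∀ i, 0 < t i} :=
    ⟨fun i j hij => pow_lt_pow_right₀ one_lt_two hij, fun i => by positivity⟩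
  by_contra! hnonpos
  obtain ⟨u, ⟨hu, hupos⟩, hu0⟩ := convex_setOf_strictMono_pos.isPreconnected.intermediate_value
    ⟨ht, htpos⟩ htwo (f := fun t => (genVandermonde t e).det)
    (by unfold genVandermonde; fun_prop) ⟨hnonpos, (det_genVandermonde_two_pow_pos he).le⟩
  exact det_genVandermonde_ne_zero he hu hupos hu0

end GenVandermonde

theorem strictMonoOn_div_one_sub : StrictMonoOn (fun y : ℝ => y / (1 - y)) (Set.Iio 1) := by
  intro y hy z hz hyz
  rw [div_lt_div_iff₀ (sub_pos.mpr hy) (sub_pos.mpr hz)]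
  nlinarith

theorem pow_mul_one_sub_pow_sub {y : ℝ} (hy : y ≠ 1) {j n : ℕ} (hj : j ≤ n) :
    y ^ j * (1 - y) ^ (n - j) = (1 - y) ^ n * (y / (1 - y)) ^ j := by
  have hy' : 1 - y ≠ 0 := sub_ne_zero.mpr hy.symm
  rw [div_pow, ← Nat.sub_add_cancel hj, pow_add, Nat.add_sub_cancel]
  field_simp

theorem bernstein_vandermonde_strictly_totally_positive_general (l n : ℕ)
    (x : Fin (l+1) → ℝ) (hmono : StrictMono x) (h01 : ∀ i, 0 < x i ∧ x i < 1) :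
    ∀ (k : ℕ) (r : Fin k → Fin (l+1)) (c : Fin k → Fin (n+1)),
      StrictMono r → StrictMono c →
      0 < ((Matrix.of fun (i : Fin (l+1)) (j : Fin (n+1)) =>
        (n.choose (j : ℕ) : ℝ) * x i ^ (j : ℕ) * (1 - x i) ^ (n - (j : ℕ))).submatrix r c).det := by
  intro k r c hr hc
  set t : Fin k → ℝ := fun i => x (r i) / (1 - x (r i))
  have hfactor : (of fun (i : Fin (l+1)) (j : Fin (n+1)) =>
        (n.choose (j : ℕ) : ℝ) * x i ^ (j : ℕ) * (1 - x i) ^ (n - (j : ℕ))).submatrix r c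
      = of fun i j => (n.choose (c j) : ℝ) *
          of (fun i j => (1 - x (r i)) ^ n * genVandermonde t (fun j => c j) i j) i j := by
    ext i j
    simp only [submatrix_apply, of_apply, genVandermonde, t, mul_assoc,
      pow_mul_one_sub_pow_sub (h01 (r i)).2.ne (Nat.lt_succ_iff.mp (c j).isLt)]
  have ht : StrictMono t := fun i j hij =>
    strictMonoOn_div_one_sub (h01 _).2 (h01 _).2 (hmono (hr hij))
  have hGV := det_genVandermonde_pos (fun i j hij => hc hij) ht
    fun i => div_pos (h01 _).1 (sub_pos.mpr (h01 _).2)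
  rw [hfactor, det_mul_row, det_mul_column]
  have hchoose (j : Fin k) : 0 < (n.choose (c j) : ℝ) :=
    Nat.cast_pos.mpr (Nat.choose_pos (Nat.lt_succ_iff.mp (c j).isLt))
  have hweight (i : Fin k) : 0 < (1 - x (r i)) ^ n := pow_pos (sub_pos.mpr (h01 _).2) n
  exact mul_pos (prod_pos fun j _ => hchoose j) (mul_pos (prod_pos fun i _ => hweight i) hGV)

theorem bernstein_vandermonde_strictly_totally_positive (l n : ℕ) (hln : n ≤ l)
    (x : Fin (l+1) → ℝ) (hmono : StrictMono x) (h01 : ∀ i, 0 < x i ∧ x i < 1) :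
    ∀ (k : ℕ) (r : Fin k → Fin (l+1)) (c : Fin k → Fin (n+1)),
      StrictMono r → StrictMono c →
      0 < ((Matrix.of fun (i : Fin (l+1)) (j : Fin (n+1)) =>
        (n.choose (j : ℕ) : ℝ) * x i ^ (j : ℕ) * (1 - x i) ^ (n - (j : ℕ))).submatrix r c).det :=
  bernstein_vandermonde_strictly_totally_positive_general l n x hmono h01
end

section
/- The determinant of the square Bernstein–Vandermonde matrix A of order n+1 with nodes 0 < x_1 < ... < x_{n+1} < 1 equals the product over i = 1..n+1 of p_{i,i}, where p_{i,i} = C(n, i-1) * (1-x_i)^{n-i+1} * (∏_{k<i} (x_i - x_k)) / (∏_{k=1}^{i-1} (1-x_k)). -/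
open Finset

private lemma prod_Ioi_swap {M : Type*} [CommMonoid M] {n : ℕ} (f : Fin n → Fin n → M) :
    ∏ i : Fin n, ∏ j ∈ Ioi i, f i j = ∏ j : Fin n, ∏ i ∈ Iio j, f i j := by
  rw [prod_sigma', prod_sigma']
  refine prod_nbij' (fun p ↦ ⟨p.2, p.1⟩) (fun p ↦ ⟨p.2, p.1⟩) ?_ ?_ ?_ ?_ ?_ <;> simp

theorem bernstein_vandermonde_det_eq_prod_pivots (n : ℕ) (x : Fin (n+1) → ℝ)
    (hmono : StrictMono x) (h01 : ∀ i, 0 < x i ∧ x i < 1) :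
    (Matrix.of fun i j : Fin (n+1) =>
      (n.choose (j : ℕ) : ℝ) * x i ^ (j : ℕ) * (1 - x i) ^ (n - (j : ℕ))).det =
    ∏ i : Fin (n+1),
      (n.choose (i : ℕ) : ℝ) * (1 - x i) ^ (n - (i : ℕ)) *
        (∏ k ∈ Finset.Iio i, (x i - x k)) / (∏ k ∈ Finset.Iio i, (1 - x k)) := by
  have hne : ∀ i, (1 : ℝ) - x i ≠ 0 := fun i => by have := (h01 i).2; intro h; linarith
  set t : Fin (n+1) → ℝ := fun i => x i / (1 - x i) with ht
  -- Step 1: factor the matrix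
  have hmat : (Matrix.of fun i j : Fin (n+1) =>
      (n.choose (j : ℕ) : ℝ) * x i ^ (j : ℕ) * (1 - x i) ^ (n - (j : ℕ))) =
      Matrix.of fun i j : Fin (n+1) => (1 - x i) ^ n *
        (Matrix.of fun i j : Fin (n+1) =>
          (n.choose (j : ℕ) : ℝ) * Matrix.vandermonde t i j) i j := by
    ext i j
    have hj : (j : ℕ) ≤ n := Nat.lt_succ_iff.mp j.isLt
    have hsplit : (1 - x i) ^ n = (1 - x i) ^ (n - (j : ℕ)) * (1 - x i) ^ (j : ℕ) := by
      rw [← pow_add, Nat.sub_add_cancel hj]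
    simp only [Matrix.of_apply, Matrix.vandermonde_apply, ht, div_pow, hsplit]
    have hinv : (1 - x i)⁻¹ ^ (j : ℕ) * (1 - x i) ^ (j : ℕ) = 1 := by
      rw [← mul_pow, inv_mul_cancel₀ (hne i), one_pow]
    field_simp
    linear_combination (-((n.choose (j : ℕ) : ℝ) * x i ^ (j : ℕ) *
      (1 - x i) ^ (n - (j : ℕ)))) * hinv
  rw [hmat, Matrix.det_mul_column, Matrix.det_mul_row, Matrix.det_vandermonde]
  -- Step 2: rewrite each Vandermonde factor
  have hfac : ∀ i j : Fin (n+1), t j - t i =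
      (x j - x i) * ((1 - x j)⁻¹ * (1 - x i)⁻¹) := by
    intro i j
    have hnum : x j * (1 - x i) - (1 - x j) * x i = x j - x i := by ring
    rw [ht]
    simp only []
    rw [div_sub_div _ _ (hne j) (hne i), hnum, div_eq_mul_inv, mul_inv]
  simp_rw [hfac, Finset.prod_mul_distrib]
  -- Step 3: evaluate the pair products
  have hcardIoi : ∀ i : Fin (n+1), (Ioi i).card = n - (i : ℕ) := by
    intro i; simp [Fin.card_Ioi]
  have hcardIio : ∀ i : Fin (n+1), (Iio i).card = (i : ℕ) := by
    intro i; simp [Fin.card_Iio]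
  have h1 : ∏ i : Fin (n+1), ∏ j ∈ Ioi i, (1 - x i)⁻¹ =
      ∏ i : Fin (n+1), ((1 - x i)⁻¹) ^ (n - (i : ℕ)) := by
    refine Finset.prod_congr rfl fun i _ => ?_
    rw [Finset.prod_const, hcardIoi]
  have h2 : ∏ i : Fin (n+1), ∏ j ∈ Ioi i, (1 - x j)⁻¹ =
      ∏ j : Fin (n+1), ((1 - x j)⁻¹) ^ (j : ℕ) := by
    rw [prod_Ioi_swap (fun i j => (1 - x j)⁻¹)]
    refine Finset.prod_congr rfl fun j _ => ?_
    rw [Finset.prod_const, hcardIio]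
  have h3 : ∏ i : Fin (n+1), ∏ j ∈ Ioi i, (x j - x i) =
      ∏ j : Fin (n+1), ∏ i ∈ Iio j, (x j - x i) :=
    prod_Ioi_swap _
  rw [h1, h2, h3]
  -- Step 4: rewrite the RHS
  have hD : ∏ i : Fin (n+1), ∏ k ∈ Iio i, (1 - x k) =
      ∏ k : Fin (n+1), (1 - x k) ^ (n - (k : ℕ)) := by
    rw [← prod_Ioi_swap (fun k i => (1 - x k))]
    refine Finset.prod_congr rfl fun k _ => ?_
    rw [Finset.prod_const, hcardIoi]
  have hRHS : ∏ i : Fin (n+1),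
      ((n.choose (i : ℕ) : ℝ) * (1 - x i) ^ (n - (i : ℕ)) *
        (∏ k ∈ Finset.Iio i, (x i - x k)) / (∏ k ∈ Finset.Iio i, (1 - x k))) =
      (∏ i : Fin (n+1), (n.choose (i : ℕ) : ℝ)) *
        (∏ i : Fin (n+1), (1 - x i) ^ (n - (i : ℕ))) *
        (∏ i : Fin (n+1), ∏ k ∈ Iio i, (x i - x k)) /
        (∏ i : Fin (n+1), (1 - x i) ^ (n - (i : ℕ))) := by
    rw [Finset.prod_div_distrib, hD, Finset.prod_mul_distrib, Finset.prod_mul_distrib]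
  have hprodne : (∏ i : Fin (n+1), (1 - x i) ^ (n - (i : ℕ))) ≠ 0 :=
    Finset.prod_ne_zero_iff.mpr fun i _ => pow_ne_zero _ (hne i)
  rw [hRHS, mul_right_comm, mul_div_assoc, div_self hprodne, mul_one]
  have hcancel : (∏ i : Fin (n+1), (1 - x i) ^ n) *
      ((∏ j : Fin (n+1), ((1 - x j)⁻¹) ^ (j : ℕ)) *
        (∏ i : Fin (n+1), ((1 - x i)⁻¹) ^ (n - (i : ℕ)))) = 1 := by
    rw [← Finset.prod_mul_distrib, ← Finset.prod_mul_distrib]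
    refine Finset.prod_eq_one fun i _ => ?_
    have hi : (i : ℕ) ≤ n := Nat.lt_succ_iff.mp i.isLt
    rw [← pow_add, Nat.add_sub_cancel' hi, ← mul_pow,
      mul_inv_cancel₀ (hne i), one_pow]
  linear_combination ((∏ i : Fin (n+1), (n.choose (i : ℕ) : ℝ)) *
    (∏ j : Fin (n+1), ∏ i ∈ Iio j, (x j - x i))) * hcancel
end

section
/- The determinant of the square Bernstein–Vandermonde matrix of order n+1 with nodes x_1, ..., x_{n+1} equals (∏_{i=0}^{n} C(n,i)) * ∏_{1 ≤ k < i ≤ n+1} (x_i - x_k). -/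
open Finset Matrix

private lemma bv_key (n j : ℕ) (hj : j ≤ n) (y : ℝ) :
    ∑ l ∈ Finset.range (n+1),
      y ^ l * (if j ≤ l then ((n-j).choose (l-j) : ℝ) * (-1 : ℝ)^(l-j) else 0) =
    y ^ j * (1 - y) ^ (n - j) := by
  have h1 : (1 - y) ^ (n - j) = ((-y) + 1) ^ (n - j) := by ring_nf
  rw [h1, add_pow]
  rw [Finset.mul_sum]
  have hsub : Finset.Ico j (n+1) ⊆ Finset.range (n+1) := by
    intro l hl
    simp only [Finset.mem_Ico] at hl
    simp [hl.2]
  rw [← Finset.sum_subset hsub (by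
    intro l hl hnl
    simp only [Finset.mem_range] at hl
    simp only [Finset.mem_Ico, not_and, not_lt] at hnl
    have : ¬ j ≤ l := by
      intro h; exact absurd hl (not_lt.mpr (hnl h))
    simp [this])]
  rw [Finset.sum_Ico_eq_sum_range]
  have hn : n + 1 - j = n - j + 1 := by omega
  rw [hn]
  apply Finset.sum_congr rfl
  intro m hm
  have : j ≤ j + m := Nat.le_add_right j m
  simp only [this, if_true, Nat.add_sub_cancel_left]
  rw [pow_add, neg_pow y m]
  ring

theorem bernstein_vandermonde_det_formula (n : ℕ) (x : Fin (n+1) → ℝ) :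
    (Matrix.of fun i j : Fin (n+1) =>
      (n.choose (j : ℕ) : ℝ) * x i ^ (j : ℕ) * (1 - x i) ^ (n - (j : ℕ))).det =
    (∏ i ∈ Finset.range (n+1), (n.choose i : ℝ)) *
      ∏ i : Fin (n+1), ∏ k ∈ Finset.Iio i, (x i - x k) := by
  set C : Matrix (Fin (n+1)) (Fin (n+1)) ℝ := Matrix.of fun l j =>
    if (j:ℕ) ≤ (l:ℕ) then
      (n.choose (j:ℕ) : ℝ) * (((n-(j:ℕ)).choose ((l:ℕ)-(j:ℕ)) : ℝ) * (-1:ℝ)^((l:ℕ)-(j:ℕ)))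
    else 0 with hC
  have hfac : (Matrix.of fun i j : Fin (n+1) =>
      (n.choose (j : ℕ) : ℝ) * x i ^ (j : ℕ) * (1 - x i) ^ (n - (j : ℕ))) =
      Matrix.vandermonde x * C := by
    ext i j
    simp only [Matrix.mul_apply, Matrix.vandermonde_apply, hC, Matrix.of_apply]
    have := bv_key n (j:ℕ) (Nat.lt_succ_iff.mp j.isLt) (x i)
    symm
    rw [Fin.sum_univ_eq_sum_range (fun l => x i ^ l *
      (if (j:ℕ) ≤ l then (n.choose (j:ℕ) : ℝ) *
        (((n-(j:ℕ)).choose (l-(j:ℕ)) : ℝ) * (-1:ℝ)^(l-(j:ℕ))) else 0)) (n+1)]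
    calc ∑ l ∈ Finset.range (n+1), x i ^ l *
          (if (j:ℕ) ≤ l then (n.choose (j:ℕ) : ℝ) *
            (((n-(j:ℕ)).choose (l-(j:ℕ)) : ℝ) * (-1:ℝ)^(l-(j:ℕ))) else 0)
        = (n.choose (j:ℕ) : ℝ) * ∑ l ∈ Finset.range (n+1), x i ^ l *
          (if (j:ℕ) ≤ l then (((n-(j:ℕ)).choose (l-(j:ℕ)) : ℝ) * (-1:ℝ)^(l-(j:ℕ))) else 0) := by
          rw [Finset.mul_sum]
          apply Finset.sum_congr rfl
          intro l _
          split <;> ring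
      _ = (n.choose (j : ℕ) : ℝ) * x i ^ (j : ℕ) * (1 - x i) ^ (n - (j : ℕ)) := by
          rw [this]; ring
  rw [hfac, Matrix.det_mul]
  have hCtri : C.BlockTriangular OrderDual.toDual := by
    intro l j h
    simp only [OrderDual.toDual_lt_toDual] at h
    have : ¬ ((j:ℕ) ≤ (l:ℕ)) := by exact_mod_cast not_le.mpr h
    simp only [hC, Matrix.of_apply, if_neg this]
  have hCdet : C.det = ∏ i ∈ Finset.range (n+1), (n.choose i : ℝ) := by
    rw [Matrix.det_of_lowerTriangular C hCtri]
    have hd : ∀ i : Fin (n+1), C i i = (n.choose (i:ℕ) : ℝ) := by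
      intro i; simp [hC]
    rw [Finset.prod_congr rfl (fun i _ => hd i),
      Fin.prod_univ_eq_prod_range (fun i => (n.choose i : ℝ))]
  rw [hCdet, Matrix.det_vandermonde]
  rw [Finset.prod_comm' (t' := Finset.univ) (s' := fun j => Finset.Iio j)
    (by intro a b; simp [Finset.mem_Ioi, Finset.mem_Iio])]
  ring
end

section
/- Let A be an l×n matrix (l ≥ n) all of whose pivots of Neville elimination are nonzero. Then for 1 < j ≤ n and j ≤ i ≤ l, the pivot satisfies p_{i,j} = det A[i-j+1,...,i | 1,...,j] / det A[i-j+1,...,i-1 | 1,...,j-1], where A[α|β] denotes the submatrix with rows α and columns β. -/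
/-- `neville a t` is the matrix `A_{t+1}` of the Neville elimination of `a`
(1-based indexing; entries outside the index range are irrelevant). -/
noncomputable def neville (a : ℕ → ℕ → ℝ) : ℕ → ℕ → ℕ → ℝ
  | 0, i, j => a i j
  | t+1, i, j =>
      if i ≤ t + 1 then neville a t i j
      else if t + 2 ≤ j then
        neville a t i j - neville a t i (t+1) / neville a t (i-1) (t+1) * neville a t (i-1) j
      else 0

/-- The pivot `(i,j)` of the Neville elimination: `p_{i,j} = a^{(j)}_{i,j}`. -/
noncomputable def nevillePivot (a : ℕ → ℕ → ℝ) (i j : ℕ) : ℝ := neville a (j-1) i j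

open Matrix

/-- Minor on rows `i-t..i-1`, columns `1..t`. -/
noncomputable def Nmat (a : ℕ → ℕ → ℝ) (i t : ℕ) : Matrix (Fin t) (Fin t) ℝ :=
  Matrix.of fun s c => a (i - t + (s : ℕ)) ((c : ℕ) + 1)

/-- Minor on rows `i-t..i`, columns `1..t, j`. -/
noncomputable def Mmat (a : ℕ → ℕ → ℝ) (i j t : ℕ) : Matrix (Fin (t+1)) (Fin (t+1)) ℝ :=
  Matrix.of fun s c => a (i - t + (s : ℕ)) (if (c : ℕ) < t then (c : ℕ) + 1 else j)

lemma det_rot (a : ℕ → ℕ → ℝ) (i j t : ℕ) :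
    (Matrix.of fun s c : Fin (t+1) =>
        a (if (s : ℕ) < t then i - t + (s : ℕ) + 1 else i - t)
          (if (c : ℕ) < t then (c : ℕ) + 1 else j)).det
      = (-1 : ℝ) ^ t * (Mmat a i j t).det := by
  have key : (Matrix.of fun s c : Fin (t+1) =>
        a (if (s : ℕ) < t then i - t + (s : ℕ) + 1 else i - t)
          (if (c : ℕ) < t then (c : ℕ) + 1 else j))
      = (Mmat a i j t).submatrix (Fin.cycleRange (⟨t, by omega⟩ : Fin (t+1))) id := by
    ext s c
    have hs := s.isLt
    simp only [Matrix.submatrix_apply, Mmat, Matrix.of_apply, id]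
    rcases lt_or_ge (s : ℕ) t with h | h
    · have hlt : s < (⟨t, by omega⟩ : Fin (t+1)) := by simpa [Fin.lt_def] using h
      rw [if_pos h, Fin.coe_cycleRange_of_lt hlt]
      have harith : i - t + (s : ℕ) + 1 = i - t + ((s : ℕ) + 1) := by omega
      rw [harith]
    · have hse : s = (⟨t, by omega⟩ : Fin (t+1)) := by
        apply Fin.ext; simp; omega
      rw [if_neg (by omega), hse, Fin.cycleRange_self]
      simp
  rw [key, Matrix.det_permute, Fin.sign_cycleRange]
  push_cast
  norm_num

lemma det_fromBlocks_one {t : ℕ} (P : Matrix (Fin t) (Fin t) ℝ) (Q : Matrix (Fin t) (Fin 1) ℝ)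
    (R : Matrix (Fin 1) (Fin t) ℝ) (S : Matrix (Fin 1) (Fin 1) ℝ)
    (X : Matrix (Fin (t+1)) (Fin (t+1)) ℝ)
    (h : ∀ (s c : Fin (t+1)),
      X s c = if hs : (s : ℕ) < t then
                (if hc : (c : ℕ) < t then P ⟨s, hs⟩ ⟨c, hc⟩ else Q ⟨s, hs⟩ 0)
              else (if hc : (c : ℕ) < t then R 0 ⟨c, hc⟩ else S 0 0)) :
    (Matrix.fromBlocks P Q R S).det = X.det := by
  rw [← Matrix.det_submatrix_equiv_self finSumFinEquiv X]
  congr 1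
  ext (s | s) (c | c) <;> simp [h, Fin.is_lt, Fin.eta, Subsingleton.elim _ (0 : Fin 1)]

lemma det_fromBlocks_two {t : ℕ} (P : Matrix (Fin t) (Fin t) ℝ) (Q : Matrix (Fin t) (Fin 2) ℝ)
    (R : Matrix (Fin 2) (Fin t) ℝ) (S : Matrix (Fin 2) (Fin 2) ℝ)
    (X : Matrix (Fin (t+2)) (Fin (t+2)) ℝ)
    (h : ∀ (s c : Fin (t+2)),
      X s c = if hs : (s : ℕ) < t then
                (if hc : (c : ℕ) < t then P ⟨s, hs⟩ ⟨c, hc⟩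
                 else Q ⟨s, hs⟩ ⟨(c : ℕ) - t, by omega⟩)
              else (if hc : (c : ℕ) < t then R ⟨(s : ℕ) - t, by omega⟩ ⟨c, hc⟩
                    else S ⟨(s : ℕ) - t, by omega⟩ ⟨(c : ℕ) - t, by omega⟩)) :
    (Matrix.fromBlocks P Q R S).det = X.det := by
  rw [← Matrix.det_submatrix_equiv_self finSumFinEquiv X]
  congr 1
  ext (s | s) (c | c) <;> simp [h, Fin.is_lt, Fin.eta]
lemma schur2 {m : ℕ} (P : Matrix (Fin m) (Fin m) ℝ) (Q : Matrix (Fin m) (Fin 2) ℝ)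
    (R : Matrix (Fin 2) (Fin m) ℝ) (S : Matrix (Fin 2) (Fin 2) ℝ) (hP : IsUnit P.det) :
    (fromBlocks P Q R S).det * P.det =
      (fromBlocks P (of fun s (_ : Fin 1) => Q s 0) (of fun (_ : Fin 1) c => R 0 c)
          (of fun _ _ => S 0 0)).det *
      (fromBlocks P (of fun s (_ : Fin 1) => Q s 1) (of fun (_ : Fin 1) c => R 1 c)
          (of fun _ _ => S 1 1)).det -
      (fromBlocks P (of fun s (_ : Fin 1) => Q s 1) (of fun (_ : Fin 1) c => R 0 c)
          (of fun _ _ => S 0 1)).det *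
      (fromBlocks P (of fun s (_ : Fin 1) => Q s 0) (of fun (_ : Fin 1) c => R 1 c)
          (of fun _ _ => S 1 0)).det := by
  letI := P.invertibleOfIsUnitDet hP
  rw [det_fromBlocks₁₁, det_fromBlocks₁₁, det_fromBlocks₁₁, det_fromBlocks₁₁, det_fromBlocks₁₁]
  simp only [det_fin_two, det_fin_one, Matrix.sub_apply, Matrix.mul_apply, of_apply]
  ring

lemma det_rot2 (a : ℕ → ℕ → ℝ) (i j t : ℕ) (hi : t + 1 ≤ i) :
    (Matrix.of fun s c : Fin (t+2) =>
        a (if (s : ℕ) < t then i - t + (s : ℕ) else if (s : ℕ) = t then i - t - 1 else i)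
          (if (c : ℕ) < t then (c : ℕ) + 1 else if (c : ℕ) = t then t + 1 else j)).det
      = (-1 : ℝ) ^ t * (Mmat a i j (t+1)).det := by
  have key : (Matrix.of fun s c : Fin (t+2) =>
        a (if (s : ℕ) < t then i - t + (s : ℕ) else if (s : ℕ) = t then i - t - 1 else i)
          (if (c : ℕ) < t then (c : ℕ) + 1 else if (c : ℕ) = t then t + 1 else j))
      = (Mmat a i j (t+1)).submatrix (Fin.cycleRange (⟨t, by omega⟩ : Fin (t+2))) id := by
    ext s c
    have hs := s.isLt
    have hc := c.isLt
    simp only [Matrix.submatrix_apply, Mmat, Matrix.of_apply, id]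
    have hcol : (if (c : ℕ) < t then (c : ℕ) + 1 else if (c : ℕ) = t then t + 1 else j)
        = (if (c : ℕ) < t + 1 then (c : ℕ) + 1 else j) := by
      split_ifs <;> omega
    rw [hcol]
    rcases lt_trichotomy (s : ℕ) t with h | h | h
    · have hlt : s < (⟨t, by omega⟩ : Fin (t+2)) := by simpa [Fin.lt_def] using h
      rw [if_pos h, Fin.coe_cycleRange_of_lt hlt]
      have harith : i - t + (s : ℕ) = i - (t+1) + ((s : ℕ) + 1) := by omega
      rw [harith]
    · have hse : s = (⟨t, by omega⟩ : Fin (t+2)) := by apply Fin.ext; simpa using h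
      rw [if_neg (by omega), if_pos h, hse, Fin.cycleRange_self]
      have harith : i - t - 1 = i - (t+1) + ((0 : Fin (t+2)) : ℕ) := by simp; omega
      rw [harith]
    · have hgt : (⟨t, by omega⟩ : Fin (t+2)) < s := by simpa [Fin.lt_def] using h
      rw [if_neg (by omega), if_neg (by omega), Fin.cycleRange_of_gt hgt]
      rw [show i - (t+1) + (s : ℕ) = i from by omega]
  rw [key, Matrix.det_permute, Fin.sign_cycleRange]
  push_cast
  norm_num

set_option maxHeartbeats 1000000 in
lemma dj (a : ℕ → ℕ → ℝ) (i j t : ℕ) (hi : t + 2 ≤ i) (hN : (Nmat a i t).det ≠ 0) :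
    (Mmat a i j (t+1)).det * (Nmat a i t).det =
      (Mmat a i j t).det * (Mmat a (i-1) (t+1) t).det -
      (Mmat a (i-1) j t).det * (Mmat a i (t+1) t).det := by
  set P := Nmat a i t with hP
  set Q : Matrix (Fin t) (Fin 2) ℝ :=
    Matrix.of fun s b => a (i - t + (s : ℕ)) (if (b : ℕ) = 0 then t + 1 else j) with hQ
  set R : Matrix (Fin 2) (Fin t) ℝ :=
    Matrix.of fun b c => a (if (b : ℕ) = 0 then i - t - 1 else i) ((c : ℕ) + 1) with hR
  set S : Matrix (Fin 2) (Fin 2) ℝ :=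
    Matrix.of fun b b' => a (if (b : ℕ) = 0 then i - t - 1 else i)
      (if (b' : ℕ) = 0 then t + 1 else j) with hS
  have hbig : (Matrix.fromBlocks P Q R S).det = (-1 : ℝ) ^ t * (Mmat a i j (t+1)).det := by
    rw [det_fromBlocks_two P Q R S (Matrix.of fun s c : Fin (t+2) =>
        a (if (s : ℕ) < t then i - t + (s : ℕ) else if (s : ℕ) = t then i - t - 1 else i)
          (if (c : ℕ) < t then (c : ℕ) + 1 else if (c : ℕ) = t then t + 1 else j))
      ?_, det_rot2 a i j t (by omega)]
    intro s c
    have hs := s.isLt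
    have hc := c.isLt
    simp only [hP, hQ, hR, hS, Nmat, Matrix.of_apply]
    split_ifs
    all_goals exact congr (congrArg a (by omega)) (by omega)
  have hf11 : (Matrix.fromBlocks P (Matrix.of fun s (_ : Fin 1) => Q s 1)
      (Matrix.of fun (_ : Fin 1) c => R 1 c) (Matrix.of fun _ _ => S 1 1)).det
      = (Mmat a i j t).det := by
    apply det_fromBlocks_one
    intro s c
    have hs := s.isLt
    have hc := c.isLt
    simp only [hP, hQ, hR, hS, Nmat, Mmat, Matrix.of_apply]
    split_ifs
    all_goals exact congr (congrArg a (by omega)) (by omega)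
  have hf10 : (Matrix.fromBlocks P (Matrix.of fun s (_ : Fin 1) => Q s 0)
      (Matrix.of fun (_ : Fin 1) c => R 1 c) (Matrix.of fun _ _ => S 1 0)).det
      = (Mmat a i (t+1) t).det := by
    apply det_fromBlocks_one
    intro s c
    have hs := s.isLt
    have hc := c.isLt
    simp only [hP, hQ, hR, hS, Nmat, Mmat, Matrix.of_apply]
    split_ifs
    all_goals exact congr (congrArg a (by omega)) (by omega)
  have hf00 : (Matrix.fromBlocks P (Matrix.of fun s (_ : Fin 1) => Q s 0)
      (Matrix.of fun (_ : Fin 1) c => R 0 c) (Matrix.of fun _ _ => S 0 0)).det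
      = (-1 : ℝ) ^ t * (Mmat a (i-1) (t+1) t).det := by
    rw [det_fromBlocks_one P _ _ _ (Matrix.of fun s c : Fin (t+1) =>
        a (if (s : ℕ) < t then i - 1 - t + (s : ℕ) + 1 else i - 1 - t)
          (if (c : ℕ) < t then (c : ℕ) + 1 else t + 1)) ?_, det_rot a (i-1) (t+1) t]
    intro s c
    have hs := s.isLt
    have hc := c.isLt
    simp only [hP, hQ, hR, hS, Nmat, Matrix.of_apply]
    split_ifs
    all_goals exact congr (congrArg a (by omega)) (by omega)
  have hf01 : (Matrix.fromBlocks P (Matrix.of fun s (_ : Fin 1) => Q s 1)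
      (Matrix.of fun (_ : Fin 1) c => R 0 c) (Matrix.of fun _ _ => S 0 1)).det
      = (-1 : ℝ) ^ t * (Mmat a (i-1) j t).det := by
    rw [det_fromBlocks_one P _ _ _ (Matrix.of fun s c : Fin (t+1) =>
        a (if (s : ℕ) < t then i - 1 - t + (s : ℕ) + 1 else i - 1 - t)
          (if (c : ℕ) < t then (c : ℕ) + 1 else j)) ?_, det_rot a (i-1) j t]
    intro s c
    have hs := s.isLt
    have hc := c.isLt
    simp only [hP, hQ, hR, hS, Nmat, Matrix.of_apply]
    split_ifs
    all_goals exact congr (congrArg a (by omega)) (by omega)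
  have h := schur2 P Q R S (isUnit_iff_ne_zero.mpr hN)
  rw [hbig, hf11, hf10, hf00, hf01] at h
  have hpow : ((-1 : ℝ) ^ t) ≠ 0 := pow_ne_zero t (by norm_num)
  apply mul_left_cancel₀ hpow
  linear_combination h
lemma Nmat_succ (a : ℕ → ℕ → ℝ) (i t : ℕ) (hi : t + 2 ≤ i) :
    Nmat a i (t+1) = Mmat a (i-1) (t+1) t := by
  ext s c
  have hc := c.isLt
  simp only [Nmat, Mmat, Matrix.of_apply]
  split_ifs
  all_goals exact congr (congrArg a (by omega)) (by omega)

lemma key (l n : ℕ) (a : ℕ → ℕ → ℝ)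
    (hpiv : ∀ j i, 1 ≤ j → j ≤ n → j ≤ i → i ≤ l → nevillePivot a i j ≠ 0) :
    ∀ t, t ≤ n → ∀ i, t + 1 ≤ i → i ≤ l →
      (Nmat a i t).det ≠ 0 ∧
      ∀ j, t + 1 ≤ j → neville a t i j = (Mmat a i j t).det / (Nmat a i t).det := by
  intro t
  induction t with
  | zero =>
    intro _ i _ _
    constructor
    · simp [Nmat, Matrix.det_fin_zero]
    · intro j _
      simp [neville, Mmat, Nmat, Matrix.det_fin_one, Matrix.det_fin_zero]
  | succ t ih =>
    intro htn i hi hil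
    have ih_i := ih (by omega) i (by omega) hil
    have ih_i1 := ih (by omega) (i-1) (by omega) (by omega)
    have hpiv1 : neville a t (i-1) (t+1) ≠ 0 := by
      have := hpiv (t+1) (i-1) (by omega) (by omega) (by omega) (by omega)
      simpa [nevillePivot] using this
    have hq := ih_i1.2 (t+1) le_rfl
    have hC : (Mmat a (i-1) (t+1) t).det ≠ 0 := by
      intro h0
      rw [hq, h0, zero_div] at hpiv1
      exact hpiv1 rfl
    have hNsucc : Nmat a i (t+1) = Mmat a (i-1) (t+1) t := Nmat_succ a i t (by omega)
    refine ⟨by rw [hNsucc]; exact hC, ?_⟩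
    intro j hj
    have hnev : neville a (t+1) i j = neville a t i j -
        neville a t i (t+1) / neville a t (i-1) (t+1) * neville a t (i-1) j := by
      rw [neville, if_neg (by omega), if_pos (by omega)]
    rw [hnev, ih_i.2 j (by omega), ih_i.2 (t+1) (by omega), ih_i1.2 j (by omega), hq, hNsucc]
    have hdj := dj a i j t (by omega) ih_i.1
    have hNi := ih_i.1
    have hNi1 := ih_i1.1
    have hstep : (Mmat a i j t).det / (Nmat a i t).det -
        ((Mmat a i (t+1) t).det / (Nmat a i t).det) /
          ((Mmat a (i-1) (t+1) t).det / (Nmat a (i-1) t).det) *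
        ((Mmat a (i-1) j t).det / (Nmat a (i-1) t).det)
        = ((Mmat a i j t).det * (Mmat a (i-1) (t+1) t).det -
            (Mmat a (i-1) j t).det * (Mmat a i (t+1) t).det) /
          ((Nmat a i t).det * (Mmat a (i-1) (t+1) t).det) := by
      field_simp [hNi, hNi1, hC]
    rw [hstep, ← hdj, mul_comm ((Mmat a i j (t+1)).det) ((Nmat a i t).det),
      mul_div_mul_left _ _ ih_i.1]

theorem neville_pivot_eq_quotient_of_minors (l n : ℕ) (hln : n ≤ l) (a : ℕ → ℕ → ℝ)
    (hpiv : ∀ j i, 1 ≤ j → j ≤ n → j ≤ i → i ≤ l → nevillePivot a i j ≠ 0) :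
    ∀ j i, 1 < j → j ≤ n → j ≤ i → i ≤ l →
      nevillePivot a i j =
        (Matrix.of fun s t : Fin j => a (i - j + 1 + (s : ℕ)) (1 + (t : ℕ))).det /
        (Matrix.of fun s t : Fin (j-1) => a (i - j + 1 + (s : ℕ)) (1 + (t : ℕ))).det := by
  intro j i h1j hjn hji hil
  obtain ⟨m, rfl⟩ : ∃ m, j = m + 1 := ⟨j - 1, by omega⟩
  have hk := (key l n a hpiv m (by omega) i (by omega) hil).2 (m+1) le_rfl
  have hpv : nevillePivot a i (m+1) = neville a m i (m+1) := rfl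
  rw [hpv, hk]
  congr 1
  · congr 1
    ext s c
    have hc := c.isLt
    simp only [Mmat, Matrix.of_apply]
    split_ifs
    all_goals exact congr (congrArg a (by omega)) (by omega)
  · congr 1
    ext s c
    simp only [Nmat, Matrix.of_apply]
    exact congr (congrArg a (by omega)) (by omega)
end

section
/- For nodes 0 < x_1 < ... < x_{n+1} < 1, the 2×2 Bernstein–Vandermonde minor det A[i-1, i | j-1, j] is strictly positive for all 2 ≤ i, j ≤ n+1, where A_{i,j} = C(n, j-1) x_i^{j-1} (1-x_i)^{n-j+1}. -/
/-- The `(i,j)` entry (1-based) of the Bernstein–Vandermonde matrix of degree `n`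
with nodes `x 1, …`. -/
noncomputable def bvEntry (n : ℕ) (x : ℕ → ℝ) (i j : ℕ) : ℝ :=
  (n.choose (j-1) : ℝ) * x i ^ (j-1) * (1 - x i) ^ (n - j + 1)

theorem bernstein_vandermonde_two_by_two_minor_pos (n : ℕ) (hn : 1 ≤ n) (x : ℕ → ℝ)
    (h01 : ∀ k, 1 ≤ k → k ≤ n + 1 → 0 < x k ∧ x k < 1)
    (hmono : ∀ k, 1 ≤ k → k ≤ n → x k < x (k+1))
    (i j : ℕ) (hi : 2 ≤ i) (hi' : i ≤ n + 1) (hj : 2 ≤ j) (hj' : j ≤ n + 1) :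
    0 < Matrix.det !![bvEntry n x (i-1) (j-1), bvEntry n x (i-1) j;
                      bvEntry n x i (j-1), bvEntry n x i j] := by
  obtain ⟨ha0, ha1⟩ := h01 (i-1) (by omega) (by omega)
  obtain ⟨hb0, hb1⟩ := h01 i (by omega) hi'
  have hab : x (i-1) < x i := by
    have := hmono (i-1) (by omega) (by omega)
    rwa [show i - 1 + 1 = i by omega] at this
  set a := x (i-1) with ha
  set b := x i with hb
  obtain ⟨k, rfl⟩ : ∃ k, j = k + 2 := ⟨j - 2, by omega⟩
  obtain ⟨m, rfl⟩ : ∃ m, n = k + 1 + m := ⟨n - k - 1, by omega⟩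
  rw [Matrix.det_fin_two_of]
  simp only [bvEntry, show k + 2 - 1 = k + 1 by omega, show k + 1 - 1 = k by omega,
    show k + 1 + m - (k + 1) + 1 = m + 1 by omega]
  have hC1 : (0:ℝ) < ((k+1+m).choose k : ℝ) := by
    exact_mod_cast Nat.choose_pos (by omega)
  have hC2 : (0:ℝ) < ((k+1+m).choose (k+1) : ℝ) := by
    exact_mod_cast Nat.choose_pos (by omega)
  have hd : (0:ℝ) < (1-a)*b - a*(1-b) := by nlinarith
  rcases m with _ | m
  · simp only [show k + 1 + 0 - (k + 2) + 1 = 1 by omega, ← ha, ← hb]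
    have h1a : (0:ℝ) < 1 - a := by linarith
    have h1b : (0:ℝ) < 1 - b := by linarith
    have key : (0:ℝ) < ((k+1+0).choose k : ℝ) * ((k+1+0).choose (k+1) : ℝ) *
        (a^k * b^k) * ((1-a) * (1-b)) * ((1-a)*b - a*(1-b)) := by positivity
    have expand : ((k+1+0).choose k : ℝ) * ((k+1+0).choose (k+1) : ℝ) *
        (a^k * b^k) * ((1-a) * (1-b)) * ((1-a)*b - a*(1-b)) =
        ((k+1+0).choose k : ℝ) * a^k * (1-a)^(0+1) *
          (((k+1+0).choose (k+1) : ℝ) * b^(k+1) * (1-b)^1) -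
        ((k+1+0).choose (k+1) : ℝ) * a^(k+1) * (1-a)^1 *
          (((k+1+0).choose k : ℝ) * b^k * (1-b)^(0+1)) := by ring
    linarith [expand ▸ key]
  · simp only [show k + 1 + (m+1) - (k + 2) + 1 = m + 1 by omega,
      show m + 1 + 1 = m + 2 from rfl, ← ha, ← hb]
    have key : (0:ℝ) < ((k+1+(m+1)).choose k : ℝ) * ((k+1+(m+1)).choose (k+1) : ℝ) *
        (a^k * b^k) * ((1-a)^(m+1) * (1-b)^(m+1)) * ((1-a)*b - a*(1-b)) := by
      have h1a : (0:ℝ) < 1 - a := by linarith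
      have h1b : (0:ℝ) < 1 - b := by linarith
      positivity
    have expand : ((k+1+(m+1)).choose k : ℝ) * ((k+1+(m+1)).choose (k+1) : ℝ) *
        (a^k * b^k) * ((1-a)^(m+1) * (1-b)^(m+1)) * ((1-a)*b - a*(1-b)) =
        ((k+1+(m+1)).choose k : ℝ) * a^k * (1-a)^(m+2) *
          (((k+1+(m+1)).choose (k+1) : ℝ) * b^(k+1) * (1-b)^(m+1)) -
        ((k+1+(m+1)).choose (k+1) : ℝ) * a^(k+1) * (1-a)^(m+1) *
          (((k+1+(m+1)).choose k : ℝ) * b^k * (1-b)^(m+2)) := by ring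
    linarith [expand ▸ key]
end

section
/- If a square matrix A of order m can be written A = F_{m-1} ⋯ F_1 D G_1 ⋯ G_{m-1}, where D is diagonal with positive diagonal entries, each F_i is unit lower bidiagonal with nonnegative subdiagonal entries, and each G_i is unit upper bidiagonal with nonnegative superdiagonal entries, then A is totally positive (all minors are nonnegative). -/
/-- Unit lower bidiagonal with nonnegative subdiagonal entries. -/
def IsNonnegUnitLowerBidiagonal {m : ℕ} (M : Matrix (Fin m) (Fin m) ℝ) : Prop :=
  (∀ i, M i i = 1) ∧ (∀ i j : Fin m, (i : ℕ) = (j : ℕ) + 1 → 0 ≤ M i j) ∧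
    ∀ i j : Fin m, (i : ℕ) ≠ (j : ℕ) → (i : ℕ) ≠ (j : ℕ) + 1 → M i j = 0

/-- Unit upper bidiagonal with nonnegative superdiagonal entries. -/
def IsNonnegUnitUpperBidiagonal {m : ℕ} (M : Matrix (Fin m) (Fin m) ℝ) : Prop :=
  (∀ i, M i i = 1) ∧ (∀ i j : Fin m, (j : ℕ) = (i : ℕ) + 1 → 0 ≤ M i j) ∧
    ∀ i j : Fin m, (j : ℕ) ≠ (i : ℕ) → (j : ℕ) ≠ (i : ℕ) + 1 → M i j = 0

/-!
Left multiplication by a unit lower bidiagonal matrix with nonnegative entries is a sequence of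
elementary row operations "add `c ≥ 0` times row `q` to the adjacent row `q + 1`", performed from
the bottom row upwards so that each uses an unmodified row. Such an operation preserves total
positivity: by multilinearity a minor through row `q + 1` becomes itself plus `c` times the minor
with row `q + 1` replaced by row `q`, which is either zero (row `q` is already present) or again a
minor with increasing row indices, since no row lies strictly between `q` and `q + 1`. Transposing
handles upper bidiagonal factors on the right, and a nonnegative diagonal matrix is totally
positive because its only nonzero minors are principal.
-/

open Matrix

theorem StrictMono.update_of_covBy {α β : Type*} [LinearOrder α] [LinearOrder β] {r : α → β}
    (hr : StrictMono r) {i : α} {q : β} (hq : q ⋖ r i) (hqr : q ∉ Set.range r) :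
    StrictMono (Function.update r i q) := by
  intro a b hab
  by_cases ha : a = i <;> by_cases hb : b = i
  · exact absurd (ha.trans hb.symm) hab.ne
  · rw [ha, Function.update_self, Function.update_of_ne hb]
    exact hq.lt.trans (ha ▸ hr hab)
  · rw [hb, Function.update_self, Function.update_of_ne ha]
    exact (hq.le_of_lt (hb ▸ hr hab)).lt_of_ne fun h => hqr ⟨a, h⟩
  · rw [Function.update_of_ne ha, Function.update_of_ne hb]
    exact hr hab

namespace Matrix

theorem updateRow_submatrix_eq_submatrix_update {α l m n o : Type*} [DecidableEq l]
    (A : Matrix m n α) (r : l → m) (c : o → n) (i : l) (q : m) :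
    (A.submatrix r c).updateRow i (fun j => A q (c j)) = A.submatrix (Function.update r i q) c := by
  ext s t
  rcases eq_or_ne s i with rfl | hs
  · simp
  · simp [hs]

variable {R : Type*} [CommRing R] [PartialOrder R] {m n : ℕ}

/-- All minors are nonnegative; this is also called *totally nonnegative*. -/
def IsTotallyPositive (A : Matrix (Fin m) (Fin n) R) : Prop :=
  ∀ (k : ℕ) (r : Fin k → Fin m) (c : Fin k → Fin n), StrictMono r → StrictMono c →
    0 ≤ (A.submatrix r c).det

theorem IsTotallyPositive.transpose {A : Matrix (Fin m) (Fin n) R} (hA : A.IsTotallyPositive) :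
    Aᵀ.IsTotallyPositive := fun k r c hr hc => by
  rw [← transpose_submatrix, det_transpose]
  exact hA k c r hc hr

theorem isTotallyPositive_transpose_iff {A : Matrix (Fin m) (Fin n) R} :
    Aᵀ.IsTotallyPositive ↔ A.IsTotallyPositive :=
  ⟨fun h => transpose_transpose A ▸ h.transpose, IsTotallyPositive.transpose⟩

theorem isTotallyPositive_diagonal [IsOrderedRing R] {d : Fin m → R} (hd : 0 ≤ d) :
    (diagonal d).IsTotallyPositive := by
  intro k r c hr hc
  by_cases hrow : ∃ s, r s ∉ Set.range c
  · obtain ⟨s, hs⟩ := hrow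
    rw [det_eq_zero_of_row_eq_zero s fun t => diagonal_apply_ne d fun h => hs ⟨t, h.symm⟩]
  by_cases hcol : ∃ t, c t ∉ Set.range r
  · obtain ⟨t, ht⟩ := hcol
    rw [det_eq_zero_of_column_eq_zero t fun s => diagonal_apply_ne d fun h => ht ⟨s, h⟩]
  push Not at hrow hcol
  obtain rfl : r = c := (hr.range_inj hc).1 <|
    (Set.range_subset_iff.2 hrow).antisymm (Set.range_subset_iff.2 hcol)
  rw [submatrix_diagonal _ _ hr.injective, det_diagonal]
  exact Finset.prod_nonneg fun s _ => hd (r s)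

theorem IsTotallyPositive.transvection_mul [IsOrderedRing R] {A : Matrix (Fin m) (Fin n) R}
    (hA : A.IsTotallyPositive) {p q : Fin m} (hqp : q ⋖ p) {c : R} (hc : 0 ≤ c) :
    (transvection p q c * A).IsTotallyPositive := by
  intro k r s hr hs
  by_cases hp : p ∈ Set.range r
  swap
  · have hsub : (transvection p q c * A).submatrix r s = A.submatrix r s := by
      ext i j
      exact transvection_mul_apply_of_ne _ _ _ _ (fun h => hp ⟨i, h⟩) _ _
    exact hsub ▸ hA k r s hr hs
  obtain ⟨i, rfl⟩ := hp
  have hsub : (transvection (r i) q c * A).submatrix r s =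
      (A.submatrix r s).updateRow i (A.submatrix r s i + c • fun j => A q (s j)) := by
    ext i' j
    rcases eq_or_ne i' i with rfl | hi'
    · simp
    · simp [hi', transvection_mul_apply_of_ne _ _ _ _ (hr.injective.ne hi')]
  have hupdate : 0 ≤ (A.submatrix (Function.update r i q) s).det := by
    by_cases hq : q ∈ Set.range r
    · obtain ⟨i', rfl⟩ := hq
      have hne : i' ≠ i := fun h => hqp.ne (congrArg r h)
      refine (det_zero_of_row_eq hne ?_).ge
      ext j
      simp [Function.update_of_ne hne]
    · exact hA k _ s (hr.update_of_covBy hqp hq) hs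
  rw [hsub, det_updateRow_add, det_updateRow_smul, updateRow_eq_self,
    updateRow_submatrix_eq_submatrix_update]
  exact add_nonneg (hA k r s hr hs) (mul_nonneg hc hupdate)

end Matrix

namespace IsNonnegUnitLowerBidiagonal

variable {m n : ℕ} {F : Matrix (Fin m) (Fin m) ℝ}

theorem mul_apply_of_val_eq_zero (hF : IsNonnegUnitLowerBidiagonal F) {a : Fin m}
    (ha : (a : ℕ) = 0) (B : Matrix (Fin m) (Fin n) ℝ) (b : Fin n) : (F * B) a b = B a b := by
  rw [mul_apply, Finset.sum_eq_single a (fun j _ hj => ?_) (by simp), hF.1 a, one_mul]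
  rw [hF.2.2 a j (fun h => hj (Fin.ext h).symm) (by omega), zero_mul]

theorem mul_apply_of_covBy (hF : IsNonnegUnitLowerBidiagonal F) {p q : Fin m} (hqp : q ⋖ p)
    (B : Matrix (Fin m) (Fin n) ℝ) (b : Fin n) : (F * B) p b = B p b + F p q * B q b := by
  have hpq : (q : ℕ) + 1 = p := by simpa using hqp
  rw [mul_apply, Finset.sum_eq_add p q hqp.ne' (fun j _ hj => ?_) (by simp) (by simp), hF.1 p,
    one_mul]
  rw [hF.2.2 p j (fun h => hj.1 (Fin.ext h).symm) (fun h => hj.2 (Fin.ext (by omega))), zero_mul]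

theorem isTotallyPositive_mul (hF : IsNonnegUnitLowerBidiagonal F) {B : Matrix (Fin m) (Fin n) ℝ}
    (hB : B.IsTotallyPositive) : (F * B).IsTotallyPositive := by
  obtain ⟨C, hC⟩ : ∃ C : ℕ → Matrix (Fin m) (Fin n) ℝ,
      ∀ l a b, C l a b = if l ≤ (a : ℕ) then (F * B) a b else B a b := ⟨_, fun _ _ _ => rfl⟩
  have hC_zero_eq_one : C 0 = C 1 := by
    ext a b
    by_cases ha : (a : ℕ) = 0
    · simp [hC, ha, hF.mul_apply_of_val_eq_zero ha]
    · simp [hC, Nat.one_le_iff_ne_zero.2 ha]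
  have hC_succ (l : ℕ) (hl : l + 1 < m) :
      C (l + 1) = transvection (⟨l + 1, hl⟩ : Fin m) ⟨l, by omega⟩ (F ⟨l + 1, hl⟩ ⟨l, by omega⟩) *
        C (l + 2) := by
    refine ext fun a b => ?_
    by_cases ha : a = ⟨l + 1, hl⟩
    · subst ha
      have hq : (⟨l, by omega⟩ : Fin m) ⋖ ⟨l + 1, hl⟩ := by simp
      simp [hC, hF.mul_apply_of_covBy hq]
    · have hal : (a : ℕ) ≠ l + 1 := fun h => ha (Fin.ext h)
      rw [transvection_mul_apply_of_ne _ _ _ _ ha]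
      simp only [hC, show l + 1 ≤ (a : ℕ) ↔ l + 2 ≤ (a : ℕ) by omega]
  have hC_tp : ∀ l ≤ m, (C l).IsTotallyPositive := by
    intro l hl
    induction hl using Nat.decreasingInduction with
    | self => convert hB; ext a b; simp [hC, a.isLt.not_ge]
    | of_succ k hk ih =>
      rcases k with _ | l
      · exact hC_zero_eq_one ▸ ih
      · exact hC_succ l hk ▸ ih.transvection_mul (by simp) (hF.2.1 _ _ rfl)
  have hC_zero_eq_mul : C 0 = F * B := by
    ext a b
    simp [hC]
  exact hC_zero_eq_mul ▸ hC_tp 0 (Nat.zero_le m)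

end IsNonnegUnitLowerBidiagonal

theorem IsNonnegUnitUpperBidiagonal.transpose {m : ℕ} {G : Matrix (Fin m) (Fin m) ℝ}
    (hG : IsNonnegUnitUpperBidiagonal G) : IsNonnegUnitLowerBidiagonal Gᵀ :=
  ⟨fun i => hG.1 i, fun i j h => hG.2.1 j i h, fun i j h h' => hG.2.2 j i h h'⟩

theorem IsNonnegUnitUpperBidiagonal.isTotallyPositive_mul {m n : ℕ}
    {G : Matrix (Fin m) (Fin m) ℝ} (hG : IsNonnegUnitUpperBidiagonal G)
    {B : Matrix (Fin n) (Fin m) ℝ} (hB : B.IsTotallyPositive) : (B * G).IsTotallyPositive := by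
  rw [← isTotallyPositive_transpose_iff, transpose_mul]
  exact hG.transpose.isTotallyPositive_mul hB.transpose

namespace Matrix.IsTotallyPositive

variable {m n : ℕ}

theorem list_prod_mul {L : List (Matrix (Fin m) (Fin m) ℝ)}
    (hL : ∀ F ∈ L, IsNonnegUnitLowerBidiagonal F) {B : Matrix (Fin m) (Fin n) ℝ}
    (hB : B.IsTotallyPositive) : (L.prod * B).IsTotallyPositive :=
  L.prod_induction (fun M => ∀ B : Matrix (Fin m) (Fin n) ℝ, B.IsTotallyPositive →
      (M * B).IsTotallyPositive)
    (fun M N hM hN B hB => Matrix.mul_assoc M N B ▸ hM _ (hN B hB))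
    (fun B hB => (Matrix.one_mul B).symm ▸ hB)
    (fun F hF _ => (hL F hF).isTotallyPositive_mul) B hB

theorem mul_list_prod {L : List (Matrix (Fin m) (Fin m) ℝ)}
    (hL : ∀ G ∈ L, IsNonnegUnitUpperBidiagonal G) {B : Matrix (Fin n) (Fin m) ℝ}
    (hB : B.IsTotallyPositive) : (B * L.prod).IsTotallyPositive :=
  L.prod_induction (fun M => ∀ B : Matrix (Fin n) (Fin m) ℝ, B.IsTotallyPositive →
      (B * M).IsTotallyPositive)
    (fun M N hM hN B hB => (Matrix.mul_assoc B M N).symm ▸ hN _ (hM B hB))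
    (fun B hB => (Matrix.mul_one B).symm ▸ hB)
    (fun G hG _ => (hL G hG).isTotallyPositive_mul) B hB

end Matrix.IsTotallyPositive

theorem totally_positive_of_bidiagonal_factorization (m : ℕ)
    (A D : Matrix (Fin m) (Fin m) ℝ)
    (F G : Fin (m-1) → Matrix (Fin m) (Fin m) ℝ)
    (hDdiag : ∀ i j, i ≠ j → D i j = 0) (hDpos : ∀ i, 0 < D i i)
    (hF : ∀ i, IsNonnegUnitLowerBidiagonal (F i))
    (hG : ∀ i, IsNonnegUnitUpperBidiagonal (G i))
    (hfact : A = (List.ofFn F).reverse.prod * D * (List.ofFn G).prod) :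
    ∀ (k : ℕ) (r c : Fin k → Fin m), StrictMono r → StrictMono c →
      0 ≤ (A.submatrix r c).det := by
  show A.IsTotallyPositive
  have hD : D.IsTotallyPositive := (show D.IsDiag from hDdiag).diagonal_diag ▸
    isTotallyPositive_diagonal fun i => (hDpos i).le
  rw [hfact, Matrix.mul_assoc]
  refine IsTotallyPositive.list_prod_mul ?_ (hD.mul_list_prod ?_)
  · simpa using fun i => hF i
  · simpa using hG
end
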